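/- Let G be 2-edge-connected with a 2-edge-cut {e1,e2}, where e1=(u1,u2), e2=(v1,v2), and G−{e1,e2} has components G1 (containing u1,v1) and G2 (containing u2,v2). Let C be any inclusion-wise minimal edge cut of G of size at most 3 with C ∩ {e1,e2} = ∅ and C ⊄ E(G1), C ⊄ E(G2). Then either |C ∩ E(G1)| = 1 or |C ∩ E(G2)| = 1, and (C ∩ E(G1)) ∪ {(u1,v1)} is an edge cut of G1 + (u1,v1) while (C ∩ E(G2)) ∪ {(u2,v2)} is an edge cut of G2 + (u2,v2). -/

import Mathlib

/-- A finite undirected multigraph: each edge `e` has two (not necessarily distinct)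
endpoints `fst e` and `snd e`. -/
structure MGraph (V E : Type*) where
  fst : E → V
  snd : E → V

namespace MGraph

variable {V E : Type*}

/-- `cut G S` is `δ(S)`, the set of edges with exactly one endpoint in `S`. -/
def cut (G : MGraph V E) (S : Set V) : Set E :=
  {e | (G.fst e ∈ S) ↔ (G.snd e ∉ S)}

/-- One step along an edge of `A`. -/
def Step (G : MGraph V E) (A : Set E) (u v : V) : Prop :=
  ∃ e ∈ A, (G.fst e = u ∧ G.snd e = v) ∨ (G.fst e = v ∧ G.snd e = u)

/-- `u` and `v` are connected using only edges from `A`. -/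
def Reach (G : MGraph V E) (A : Set E) (u v : V) : Prop :=
  Relation.ReflTransGen (G.Step A) u v

/-- The spanning subgraph `(V, A)` is connected. -/
def ConnectedOn (G : MGraph V E) (A : Set E) : Prop :=
  ∀ u v : V, G.Reach A u v

/-- The subgraph induced on the vertex set `W`, using only edges of `A` with both
endpoints in `W`, is connected. -/
def InducedConnected (G : MGraph V E) (A : Set E) (W : Set V) : Prop :=
  ∀ u ∈ W, ∀ v ∈ W, G.Reach {e | e ∈ A ∧ G.fst e ∈ W ∧ G.snd e ∈ W} u v

/-- `s` and `t` are `p`-edge-connected in the spanning subgraph `(V, A)`: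
every edge cut separating them has at least `p` edges. -/
def EdgeConnected (G : MGraph V E) (A : Set E) (p : ℕ) (s t : V) : Prop :=
  ∀ S : Set V, s ∈ S → t ∉ S → p ≤ (G.cut S ∩ A).ncard

/-- `S` separates the terminal pair `st`: exactly one of the two terminals lies in `S`. -/
def Separates (S : Set V) (st : V × V) : Prop := (st.1 ∈ S) ↔ (st.2 ∉ S)

/-- `G` is 2-edge-connected: connected, and still connected after removing any single edge. -/
def TwoEdgeConnected (G : MGraph V E) : Prop :=
  G.ConnectedOn Set.univ ∧ ∀ e : E, G.ConnectedOn {e}ᶜ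

/-- `G` is 3-edge-connected: connected, and still connected after removing any two edges. -/
def ThreeEdgeConnected (G : MGraph V E) : Prop :=
  G.ConnectedOn Set.univ ∧ ∀ e f : E, G.ConnectedOn ({e, f} : Set E)ᶜ

/-- `C` is a 2-edge-cut of a 2-edge-connected graph `G`. -/
def TwoEdgeCut (G : MGraph V E) (C : Set E) : Prop :=
  C.ncard = 2 ∧ ¬ G.ConnectedOn Cᶜ

/-- The subgraph of `G` induced on `W` is 2-edge-connected. -/
def InducedTwoEdgeConnected (G : MGraph V E) (W : Set V) : Prop :=
  G.InducedConnected Set.univ W ∧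
    ∀ f : E, G.fst f ∈ W → G.snd f ∈ W → G.InducedConnected {f}ᶜ W

end MGraph

/-! A minimal cut `δ(S)` avoiding the 2-edge-cut `{e₁, e₂}` has both ends of `e₁` on one side
of `S`, and likewise both ends of `e₂`. If `u₁` and `v₁` were also on the same side, then the part
of `δ(S)` inside `V₁` would itself be the cut of `V₁ ∩ S` (or `V₁ \ S`), a proper nonempty
subcut; so `S` separates `u₁` from `v₁`, hence also `u₂` from `v₂`, and restricting `S` to each
side gives the two cuts of `Gᵢ + (uᵢ, vᵢ)`. The cardinality claim holds because `C` meets both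
sides and has at most three edges. -/

theorem Set.ncard_eq_one_or_of_disjoint_of_ncard_le_three {α : Type*} {A B C : Set α}
    (hC : C.Finite) (hC3 : C.ncard ≤ 3) (hA : A ⊆ C) (hB : B ⊆ C) (hAB : Disjoint A B)
    (hA0 : A.Nonempty) (hB0 : B.Nonempty) : A.ncard = 1 ∨ B.ncard = 1 := by
  have hunion := Set.ncard_union_eq hAB (hC.subset hA) (hC.subset hB)
  have hle := Set.ncard_le_ncard (Set.union_subset hA hB) hC
  have hApos := (Set.ncard_pos (hC.subset hA)).2 hA0
  have hBpos := (Set.ncard_pos (hC.subset hB)).2 hB0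
  omega

namespace MGraph

variable {V E : Type*} (G : MGraph V E)

def edgesIn (W : Set V) : Set E :=
  {e | G.fst e ∈ W ∧ G.snd e ∈ W}

def IsEdgeCut (C : Set E) : Prop :=
  ∃ S : Set V, S.Nonempty ∧ Sᶜ.Nonempty ∧ C = G.cut S

theorem notMem_cut_iff {S : Set V} {e : E} : e ∉ G.cut S ↔ (G.fst e ∈ S ↔ G.snd e ∈ S) := by
  simp only [cut, Set.mem_ofPred_eq]
  tauto

theorem cut_compl (S : Set V) : G.cut Sᶜ = G.cut S := by
  ext e
  simp only [cut, Set.mem_ofPred_eq, Set.mem_compl_iff]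
  tauto

theorem isEdgeCut_cut {T : Set V} (h : (G.cut T).Nonempty) : G.IsEdgeCut (G.cut T) := by
  obtain ⟨e, he⟩ := h
  have he : G.fst e ∈ T ↔ G.snd e ∉ T := he
  by_cases hfst : G.fst e ∈ T
  · exact ⟨T, ⟨_, hfst⟩, ⟨_, he.mp hfst⟩, rfl⟩
  · exact ⟨T, ⟨G.snd e, by tauto⟩, ⟨_, hfst⟩, rfl⟩

theorem disjoint_edgesIn_compl (W : Set V) : Disjoint (G.edgesIn W) (G.edgesIn Wᶜ) :=
  Set.disjoint_left.mpr fun _ h h' => h'.1 h.1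

theorem inter_edgesIn_nonempty {C : Set E} {W : Set V} (hC : Disjoint C (G.cut W))
    (h : ¬ C ⊆ G.edgesIn Wᶜ) : (C ∩ G.edgesIn W).Nonempty := by
  obtain ⟨e, heC, he⟩ := Set.not_subset.mp h
  have hW := G.notMem_cut_iff.mp (Set.disjoint_left.mp hC heC)
  simp only [edgesIn, Set.mem_ofPred_eq, Set.mem_compl_iff] at he
  exact ⟨e, heC, by tauto⟩

theorem cut_inter_eq_cut_inter_edgesIn {W S : Set V}
    (hW : ∀ e ∈ G.cut W, G.fst e ∉ S ∧ G.snd e ∉ S) :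
    G.cut (W ∩ S) = G.cut S ∩ G.edgesIn W := by
  ext e
  simp only [edgesIn, Set.mem_inter_iff]
  by_cases he : e ∈ G.cut W
  · have hS := hW e he
    simp only [cut, Set.mem_ofPred_eq, Set.mem_inter_iff] at he hS ⊢
    tauto
  · rw [notMem_cut_iff] at he
    simp only [cut, Set.mem_ofPred_eq, Set.mem_inter_iff]
    tauto

theorem cut_subset_edgesIn_of_minimal {S W : Set V}
    (hmin : ∀ C ⊂ G.cut S, C.Nonempty → ¬ G.IsEdgeCut C)
    (hW : ∀ e ∈ G.cut W, G.fst e ∉ S ∧ G.snd e ∉ S)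
    (hne : (G.cut S ∩ G.edgesIn W).Nonempty) : G.cut S ⊆ G.edgesIn W := by
  by_contra hsub
  have hss : G.cut S ∩ G.edgesIn W ⊂ G.cut S :=
    Set.inter_subset_left.ssubset_of_not_subset fun h => hsub (h.trans Set.inter_subset_right)
  rw [← G.cut_inter_eq_cut_inter_edgesIn hW] at hss hne
  exact hmin _ hss hne (G.isEdgeCut_cut hne)

theorem exists_separating_subset_cut_inter_edgesIn {S W : Set V} {u v : V}
    (hu : u ∈ W) (hv : v ∈ W) (huv : u ∈ S ↔ v ∉ S) :
    ∃ T ⊆ W, u ∈ T ∧ v ∈ W \ T ∧ G.cut S ∩ G.edgesIn W = G.edgesIn W ∩ G.cut T := by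
  refine ⟨{x | x ∈ W ∧ (x ∈ S ↔ u ∈ S)}, fun x hx => hx.1, ⟨hu, Iff.rfl⟩,
    ⟨hv, fun h => by have := h.2; tauto⟩, ?_⟩
  ext e
  simp only [cut, edgesIn, Set.mem_inter_iff, Set.mem_ofPred_eq]
  by_cases h : G.fst e ∈ W ∧ G.snd e ∈ W
  · simp only [h, true_and]
    tauto
  · tauto

end MGraph

theorem stmt12_general {V E : Type*} [Fintype E] (G : MGraph V E)
    (e1 e2 : E)
    (u1 u2 v1 v2 : V)
    (he1 : G.fst e1 = u1 ∧ G.snd e1 = u2) (he2 : G.fst e2 = v1 ∧ G.snd e2 = v2)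
    (V1 V2 : Set V) (hpart : V1 ∪ V2 = Set.univ) (hdisj : Disjoint V1 V2)
    (hu1 : u1 ∈ V1) (hv1 : v1 ∈ V1) (hu2 : u2 ∈ V2) (hv2 : v2 ∈ V2)
    (hcross : ∀ e : E, e ≠ e1 → e ≠ e2 → ((G.fst e ∈ V1) ↔ (G.snd e ∈ V1)))
    (C : Set E)
    (hCcut : ∃ S : Set V, S.Nonempty ∧ Sᶜ.Nonempty ∧ C = G.cut S)
    (hCmin : ∀ C' : Set E, C' ⊂ C → C'.Nonempty →
      ¬ ∃ S : Set V, S.Nonempty ∧ Sᶜ.Nonempty ∧ C' = G.cut S)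
    (hC3 : C.ncard ≤ 3) (hCe1 : e1 ∉ C) (hCe2 : e2 ∉ C)
    (hC1 : ¬ C ⊆ {e : E | G.fst e ∈ V1 ∧ G.snd e ∈ V1})
    (hC2 : ¬ C ⊆ {e : E | G.fst e ∈ V2 ∧ G.snd e ∈ V2}) :
    ((C ∩ {e : E | G.fst e ∈ V1 ∧ G.snd e ∈ V1}).ncard = 1 ∨
     (C ∩ {e : E | G.fst e ∈ V2 ∧ G.snd e ∈ V2}).ncard = 1) ∧
    (∃ S : Set V, S ⊆ V1 ∧ u1 ∈ S ∧ v1 ∈ V1 \ S ∧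
      C ∩ {e : E | G.fst e ∈ V1 ∧ G.snd e ∈ V1}
        = {e : E | (G.fst e ∈ V1 ∧ G.snd e ∈ V1) ∧ ((G.fst e ∈ S) ↔ (G.snd e ∉ S))}) ∧
    (∃ S : Set V, S ⊆ V2 ∧ u2 ∈ S ∧ v2 ∈ V2 \ S ∧
      C ∩ {e : E | G.fst e ∈ V2 ∧ G.snd e ∈ V2}
        = {e : E | (G.fst e ∈ V2 ∧ G.snd e ∈ V2) ∧ ((G.fst e ∈ S) ↔ (G.snd e ∉ S))}) := by
  obtain ⟨S, -, -, rfl⟩ := hCcut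
  obtain rfl : V2 = V1ᶜ := (IsCompl.of_eq hdisj.eq_bot hpart).compl_eq.symm
  obtain ⟨rfl, rfl⟩ := he1
  obtain ⟨rfl, rfl⟩ := he2
  have hcutV1 : G.cut V1 ⊆ {e1, e2} := fun e he => by
    by_contra h
    simp only [Set.mem_insert_iff, Set.mem_singleton_iff, not_or] at h
    exact G.notMem_cut_iff.mpr (hcross e h.1 h.2) he
  have hdisjS : Disjoint (G.cut S) (G.cut V1) := Set.disjoint_left.mpr fun e heS heV1 => by
    rcases hcutV1 heV1 with rfl | rfl <;> contradiction
  have hA := G.inter_edgesIn_nonempty hdisjS hC2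
  have hB := G.inter_edgesIn_nonempty (W := V1ᶜ) (by rwa [MGraph.cut_compl]) (by rwa [compl_compl])
  have hsep : G.fst e1 ∈ S ↔ G.fst e2 ∉ S := by
    by_contra hsame
    obtain ⟨S', hS', hu1', hv1'⟩ : ∃ S', G.cut S' = G.cut S ∧
        G.fst e1 ∉ S' ∧ G.fst e2 ∉ S' := by
      by_cases hu1S : G.fst e1 ∈ S
      · exact ⟨Sᶜ, G.cut_compl S, fun h => h hu1S, fun h => by tauto⟩
      · exact ⟨S, rfl, hu1S, by tauto⟩
    rw [← hS'] at hCmin hA hC1 hCe1 hCe2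
    refine hC1 (G.cut_subset_edgesIn_of_minimal hCmin (fun e he => ?_) hA)
    rcases hcutV1 he with rfl | rfl
    · exact ⟨hu1', fun h => hu1' ((G.notMem_cut_iff.mp hCe1).mpr h)⟩
    · exact ⟨hv1', fun h => hv1' ((G.notMem_cut_iff.mp hCe2).mpr h)⟩
  have hsep' : G.snd e1 ∈ S ↔ G.snd e2 ∉ S := by
    rw [← G.notMem_cut_iff.mp hCe1, ← G.notMem_cut_iff.mp hCe2]
    exact hsep
  exact ⟨Set.ncard_eq_one_or_of_disjoint_of_ncard_le_three (Set.toFinite _) hC3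
      Set.inter_subset_left Set.inter_subset_left
      ((G.disjoint_edgesIn_compl V1).mono Set.inter_subset_right Set.inter_subset_right) hA hB,
    G.exists_separating_subset_cut_inter_edgesIn hu1 hv1 hsep,
    G.exists_separating_subset_cut_inter_edgesIn hu2 hv2 hsep'⟩

/-- structure of small minimal cuts relative to a 2-edge-cut.
Let `{e1,e2}` be a 2-edge-cut of the 2-edge-connected multigraph `G`, splitting it into
sides `V1` (containing `u1, v1`) and `V2` (containing `u2, v2`). Let `C` be an
inclusion-wise minimal edge cut of `G` with `|C| ≤ 3`, `C ∩ {e1,e2} = ∅` and `C` not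
contained in either side. Then `|C ∩ E(G1)| = 1` or `|C ∩ E(G2)| = 1`, and
`(C ∩ E(G1)) ∪ {(u1,v1)}` is an edge cut of `G1 + (u1,v1)` (expressed by a vertex set
`S ⊆ V1` separating `u1` from `v1` whose boundary inside `V1` is exactly `C ∩ E(G1)`),
and symmetrically for `G2 + (u2,v2)`. -/
theorem stmt12 {V E : Type*} [Fintype V] [Fintype E] (G : MGraph V E)
    (h2ec : G.TwoEdgeConnected)
    (e1 e2 : E) (hne : e1 ≠ e2)
    (u1 u2 v1 v2 : V)
    (he1 : G.fst e1 = u1 ∧ G.snd e1 = u2) (he2 : G.fst e2 = v1 ∧ G.snd e2 = v2)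
    (hdisconn : ¬ G.ConnectedOn ({e1, e2} : Set E)ᶜ)
    (V1 V2 : Set V) (hpart : V1 ∪ V2 = Set.univ) (hdisj : Disjoint V1 V2)
    (hu1 : u1 ∈ V1) (hv1 : v1 ∈ V1) (hu2 : u2 ∈ V2) (hv2 : v2 ∈ V2)
    (hcross : ∀ e : E, e ≠ e1 → e ≠ e2 → ((G.fst e ∈ V1) ↔ (G.snd e ∈ V1)))
    (hG1conn : G.InducedConnected ({e1, e2} : Set E)ᶜ V1)
    (hG2conn : G.InducedConnected ({e1, e2} : Set E)ᶜ V2)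
    (C : Set E)
    (hCcut : ∃ S : Set V, S.Nonempty ∧ Sᶜ.Nonempty ∧ C = G.cut S)
    (hCmin : ∀ C' : Set E, C' ⊂ C → C'.Nonempty →
      ¬ ∃ S : Set V, S.Nonempty ∧ Sᶜ.Nonempty ∧ C' = G.cut S)
    (hC3 : C.ncard ≤ 3) (hCe1 : e1 ∉ C) (hCe2 : e2 ∉ C)
    (hC1 : ¬ C ⊆ {e : E | G.fst e ∈ V1 ∧ G.snd e ∈ V1})
    (hC2 : ¬ C ⊆ {e : E | G.fst e ∈ V2 ∧ G.snd e ∈ V2}) :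
    ((C ∩ {e : E | G.fst e ∈ V1 ∧ G.snd e ∈ V1}).ncard = 1 ∨
     (C ∩ {e : E | G.fst e ∈ V2 ∧ G.snd e ∈ V2}).ncard = 1) ∧
    (∃ S : Set V, S ⊆ V1 ∧ u1 ∈ S ∧ v1 ∈ V1 \ S ∧
      C ∩ {e : E | G.fst e ∈ V1 ∧ G.snd e ∈ V1}
        = {e : E | (G.fst e ∈ V1 ∧ G.snd e ∈ V1) ∧ ((G.fst e ∈ S) ↔ (G.snd e ∉ S))}) ∧
    (∃ S : Set V, S ⊆ V2 ∧ u2 ∈ S ∧ v2 ∈ V2 \ S ∧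
      C ∩ {e : E | G.fst e ∈ V2 ∧ G.snd e ∈ V2}
        = {e : E | (G.fst e ∈ V2 ∧ G.snd e ∈ V2) ∧ ((G.fst e ∈ S) ↔ (G.snd e ∉ S))}) :=
  stmt12_general G e1 e2 u1 u2 v1 v2 he1 he2 V1 V2 hpart hdisj hu1 hv1 hu2 hv2 hcross C hCcut hCmin
    hC3 hCe1 hCe2 hC1 hC2
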